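/- Let α, ε > 0. Then there exists d₀ such that for all d ≥ d₀ the inclusion {z ∈ (0,1)^d : H(z) ≥ 1 − α + ε} ⊆ [0,1]^d_α holds; equivalently, for every z in the open cube (0,1)^d with H(z) ≥ 1 − α + ε and every closed affine halfspace U ⊆ ℝ^d containing z, one has |U ∩ {0,1}^d| ≥ 2^{(1−α)d}. -/

import Mathlib

open Filter
open scoped BigOperators

/-- The binary entropy function `h(ξ) = ξ log₂(1/ξ) + (1-ξ) log₂(1/(1-ξ))`. -/
noncomputable def binEnt (x : ℝ) : ℝ :=
  x * Real.logb 2 x⁻¹ + (1 - x) * Real.logb 2 (1 - x)⁻¹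

/-- The 0/1-point of `ℝ^d` associated to a Boolean vector. -/
def bv {d : ℕ} (x : Fin d → Bool) : Fin d → ℝ := fun i => if x i then 1 else 0

/-- `2^d · p(z)`: the minimum number of cube vertices contained in a closed affine
halfspace `{x | ∑ i, a i * x i ≤ c}` containing `z`. -/
noncomputable def minHalfCount (d : ℕ) (z : Fin d → ℝ) : ℕ :=
  sInf {m : ℕ | ∃ (a : Fin d → ℝ) (c : ℝ), (∑ i, a i * z i) ≤ c ∧
    m = {x : Fin d → Bool | (∑ i, a i * bv x i) ≤ c}.ncard}

/-- `[0,1]^d_α = {z ∈ [0,1]^d : p(z) ≥ 2^{-αd}}`. -/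
noncomputable def cubeAlpha (d : ℕ) (α : ℝ) : Set (Fin d → ℝ) :=
  {z | (∀ i, z i ∈ Set.Icc (0 : ℝ) 1) ∧
    (2 : ℝ) ^ (-(α * (d : ℝ))) ≤ (2 : ℝ) ^ (-(d : ℝ)) * (minHalfCount d z : ℝ)}

/-!
Fix a closed halfspace `a · x ≤ c` containing `z`. Call a coordinate balanced if
`δ ≤ zᵢ ≤ 1 - δ`; off the balanced coordinates `h(zᵢ)` is tiny. Freeze the `m` balanced
coordinates with the largest `|aᵢ|`, and all unbalanced ones, at the vertex value minimizing
`aᵢ xᵢ`, and move the other balanced coordinates a fraction `θ` towards it. Under the product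
Bernoulli measure with these marginals `w`, the form `a · x` has mean at least `g` below `c`
and variance at most `g² / 2` (the frozen heavy coordinates pay for the variance of the light
ones), while the surprisal `-log₂ w(x)` has mean `∑ h(wᵢ) ≥ (1 - α + ε / 2) d - m` and variance
`O(d)`. By Chebyshev, a set of measure `≥ 1/4` inside the halfspace consists of points of
measure `≤ 2^{-β}` with `β ≥ (1 - α) d + 2`, so it has at least `2^{(1 - α) d}` elements.
-/

open Finset Real

lemma binEnt_eq_binEntropy_div (x : ℝ) : binEnt x = binEntropy x / log 2 := by
  simp only [binEnt, binEntropy, logb, add_div, mul_div_assoc]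

lemma binEnt_le_one (x : ℝ) : binEnt x ≤ 1 := by
  rw [binEnt_eq_binEntropy_div, div_le_one (log_pos one_lt_two)]
  exact binEntropy_le_log_two

lemma binEnt_nonneg {x : ℝ} (hx : x ∈ Set.Icc 0 1) : 0 ≤ binEnt x := by
  rw [binEnt_eq_binEntropy_div]
  exact div_nonneg (binEntropy_nonneg hx.1 hx.2) (log_nonneg one_le_two)

lemma binEnt_one_sub (x : ℝ) : binEnt (1 - x) = binEnt x := by
  simp [binEnt_eq_binEntropy_div]

lemma binEnt_eq_zero_of_eq_zero_or_eq_one {x : ℝ} (hx : x = 0 ∨ x = 1) : binEnt x = 0 := by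
  rcases hx with rfl | rfl <;> simp [binEnt_eq_binEntropy_div]

lemma continuous_binEnt : Continuous binEnt := by
  simpa only [funext binEnt_eq_binEntropy_div] using binEntropy_continuous.div_const _

lemma concaveOn_binEnt : ConcaveOn ℝ (Set.Icc 0 1) binEnt := by
  simpa only [funext binEnt_eq_binEntropy_div, div_eq_inv_mul, smul_eq_mul] using
    strictConcave_binEntropy.concaveOn.smul (inv_nonneg.2 (log_nonneg one_le_two))

lemma exists_pos_binEnt_le_of_notMem_Icc {η : ℝ} (hη : 0 < η) :
    ∃ δ > 0, ∀ t ∈ Set.Icc (0 : ℝ) 1, t ∉ Set.Icc δ (1 - δ) → binEnt t ≤ η := by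
  have hnear : ∀ᶠ t in nhds 0, binEnt t < η :=
    continuous_binEnt.continuousAt.eventually_lt continuousAt_const
      (by simpa [binEnt_eq_zero_of_eq_zero_or_eq_one] using hη)
  obtain ⟨δ, hδ, hsmall⟩ := Metric.eventually_nhds_iff.1 hnear
  refine ⟨δ, hδ, fun t ht hbal => ?_⟩
  rcases not_and_or.1 hbal with hlt | hgt
  · refine (hsmall ?_).le
    rw [Real.dist_eq, sub_zero, abs_of_nonneg ht.1]
    exact not_le.1 hlt
  · rw [← binEnt_one_sub]
    refine (hsmall ?_).le
    rw [Real.dist_eq, sub_zero, abs_of_nonneg (sub_nonneg.2 ht.2)]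
    linarith [not_le.1 hgt]

noncomputable def corner (a : ℝ) : ℝ := if a < 0 then 1 else 0

lemma corner_eq_zero_or_eq_one (a : ℝ) : corner a = 0 ∨ corner a = 1 := by
  unfold corner; split_ifs <;> simp

lemma mul_corner_sub_le {a z δ : ℝ} (hz : z ∈ Set.Icc δ (1 - δ)) :
    a * (corner a - z) ≤ -(δ * |a|) := by
  unfold corner
  split_ifs with ha
  · rw [abs_of_neg ha]; nlinarith [hz.2]
  · rw [abs_of_nonneg (not_lt.1 ha)]; nlinarith [hz.1, not_lt.1 ha]

noncomputable def tilt (a z t : ℝ) : ℝ := z + t * (corner a - z)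

lemma tilt_one (a z : ℝ) : tilt a z 1 = corner a := by simp [tilt]

lemma tilt_mem_Icc {a z t : ℝ} (hz : z ∈ Set.Icc 0 1) (ht : t ∈ Set.Icc 0 1) :
    tilt a z t ∈ Set.Icc 0 1 := by
  unfold tilt
  rcases corner_eq_zero_or_eq_one a with h | h <;> rw [h] <;>
    constructor <;> nlinarith [hz.1, hz.2, ht.1, ht.2]

lemma tilt_mem_Icc_half {a z t δ : ℝ} (hδ : 0 ≤ δ) (hz : z ∈ Set.Icc δ (1 - δ))
    (ht : t ∈ Set.Icc 0 (1 / 2)) :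
    tilt a z t ∈ Set.Icc (δ / 2) (1 - δ / 2) := by
  unfold tilt
  rcases corner_eq_zero_or_eq_one a with h | h <;> rw [h] <;>
    constructor <;> nlinarith [hz.1, hz.2, ht.1, ht.2, hδ]

lemma mul_tilt_add_le {a z t δ : ℝ} (hz : z ∈ Set.Icc δ (1 - δ)) (ht : 0 ≤ t) :
    a * tilt a z t + t * (δ * |a|) ≤ a * z := by
  unfold tilt
  nlinarith [mul_le_mul_of_nonneg_left (mul_corner_sub_le (a := a) hz) ht]

lemma one_sub_mul_binEnt_le_binEnt_tilt {a z t : ℝ} (hz : z ∈ Set.Icc 0 1)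
    (ht : t ∈ Set.Icc 0 1) : (1 - t) * binEnt z ≤ binEnt (tilt a z t) := by
  have hc : corner a ∈ Set.Icc (0 : ℝ) 1 := by
    rcases corner_eq_zero_or_eq_one a with h | h <;> simp [h]
  have htilt : tilt a z t = (1 - t) • z + t • corner a := by
    simp only [tilt, smul_eq_mul]; ring
  simpa [htilt, binEnt_eq_zero_of_eq_zero_or_eq_one (corner_eq_zero_or_eq_one a)] using
    concaveOn_binEnt.2 hz hc (sub_nonneg.2 ht.2) ht.1 (by ring)

lemma sum_le_one_div_of_sum_mul_sq_le {X : Type*} [Fintype X] {μ F : X → ℝ}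
    (hμ : ∀ x, 0 ≤ μ x) {g k : ℝ} (hg : 0 ≤ g) (hk : 0 < k)
    (hF : k * ∑ x, μ x * F x ^ 2 ≤ g ^ 2) (s : Finset X) (hs : ∀ x ∈ s, g < F x) :
    ∑ x ∈ s, μ x ≤ 1 / k := by
  have hterm : ∀ x, 0 ≤ μ x * F x ^ 2 := fun x => mul_nonneg (hμ x) (sq_nonneg _)
  rcases hg.eq_or_lt with rfl | hg
  · have hzero := (sum_eq_zero_iff_of_nonneg fun x _ => hterm x).1
      (le_antisymm (by nlinarith) (sum_nonneg fun x _ => hterm x))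
    rw [sum_eq_zero fun x hx => ?_]
    · positivity
    · have := hzero x (mem_univ x)
      exact (mul_eq_zero.1 this).resolve_right (pow_ne_zero 2 (hs x hx).ne')
  · calc ∑ x ∈ s, μ x ≤ ∑ x ∈ s, μ x * (F x / g) ^ 2 :=
          sum_le_sum fun x hx => le_mul_of_one_le_right (hμ x)
            (one_le_pow₀ ((one_le_div hg).2 (hs x hx).le))
      _ ≤ ∑ x, μ x * (F x / g) ^ 2 :=
          sum_le_sum_of_subset_of_nonneg (subset_univ s) fun x _ _ =>
            mul_nonneg (hμ x) (sq_nonneg _)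
      _ = (∑ x, μ x * F x ^ 2) / g ^ 2 := by
          rw [sum_div]; simp only [div_pow, mul_div_assoc]
      _ ≤ 1 / k := by
          rw [div_le_div_iff₀ (by positivity) hk]; linarith

lemma Finset.exists_subset_card_le_forall_mul_le_sum {ι : Type*} [DecidableEq ι] (f : ι → ℝ)
    (m : ℕ) (B : Finset ι) : ∃ T ⊆ B, #T ≤ m ∧ ∀ i ∈ B \ T, m * f i ≤ ∑ j ∈ T, f j := by
  induction m generalizing B with
  | zero => exact ⟨∅, empty_subset _, by simp, by simp⟩
  | succ m ih =>
    rcases B.eq_empty_or_nonempty with rfl | hB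
    · exact ⟨∅, empty_subset _, by simp, by simp⟩
    obtain ⟨j, hj, hmax⟩ := B.exists_max_image f hB
    obtain ⟨T, hTB, hTm, hT⟩ := ih (B.erase j)
    have hjT : j ∉ T := fun h => by simpa using hTB h
    refine ⟨insert j T, insert_subset hj (hTB.trans (erase_subset _ _)),
      (card_insert_le _ _).trans (by omega), fun i hi => ?_⟩
    simp only [mem_sdiff, mem_insert, not_or] at hi
    have := hT i (mem_sdiff.2 ⟨mem_erase.2 ⟨hi.2.1, hi.1⟩, hi.2.2⟩)
    rw [sum_insert hjT]; push_cast
    linarith [hmax i hi.1]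

def bernoulliWeight (p : ℝ) (b : Bool) : ℝ := if b then p else 1 - p

lemma bernoulliWeight_nonneg {p : ℝ} (hp : p ∈ Set.Icc 0 1) (b : Bool) :
    0 ≤ bernoulliWeight p b := by
  unfold bernoulliWeight; split_ifs <;> linarith [hp.1, hp.2]

section ProductWeight

variable {ι : Type*} [Fintype ι] (w : ι → ℝ)

def productWeight (x : ι → Bool) : ℝ := ∏ i, bernoulliWeight (w i) (x i)

lemma productWeight_nonneg {w : ι → ℝ} (hw : ∀ i, w i ∈ Set.Icc 0 1) (x : ι → Bool) :
    0 ≤ productWeight w x :=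
  prod_nonneg fun i _ => bernoulliWeight_nonneg (hw i) (x i)

lemma productWeight_le_two_rpow {w : ι → ℝ} (hw : ∀ i, w i ∈ Set.Icc 0 1) (x : ι → Bool) :
    productWeight w x ≤ 2 ^ ∑ i, logb 2 (bernoulliWeight (w i) (x i)) := by
  by_cases hzero : ∃ i, bernoulliWeight (w i) (x i) = 0
  · obtain ⟨i, hi⟩ := hzero
    rw [productWeight, prod_eq_zero (mem_univ i) hi]
    positivity
  · push Not at hzero
    rw [rpow_sum_of_pos two_pos, productWeight]
    exact (prod_congr rfl fun i _ => rpow_logb two_pos (by norm_num)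
      ((bernoulliWeight_nonneg (hw i) (x i)).lt_of_ne (hzero i).symm)).ge

variable [DecidableEq ι]

lemma sum_productWeight_mul_prod (ψ : ι → Bool → ℝ) :
    ∑ x, productWeight w x * ∏ i, ψ i (x i) = ∏ i, (w i * ψ i true + (1 - w i) * ψ i false) := by
  simp only [productWeight, ← prod_mul_distrib]
  rw [← Fintype.prod_sum fun i b => bernoulliWeight (w i) b * ψ i b]
  simp [bernoulliWeight]

lemma sum_productWeight : ∑ x, productWeight w x = 1 := by
  simpa using sum_productWeight_mul_prod w fun _ _ => 1

lemma sum_productWeight_mul_sq_sum (φ : ι → Bool → ℝ)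
    (hφ : ∀ i, w i * φ i true + (1 - w i) * φ i false = 0) :
    ∑ x, productWeight w x * (∑ i, φ i (x i)) ^ 2 =
      ∑ i, (w i * φ i true ^ 2 + (1 - w i) * φ i false ^ 2) := by
  have hpair : ∀ i k, ∑ x, productWeight w x * (φ i (x i) * φ k (x k)) =
      if i = k then w i * φ i true ^ 2 + (1 - w i) * φ i false ^ 2 else 0 := by
    intro i k
    set ψ : ι → Bool → ℝ := fun l b => (if l = i then φ i b else 1) * (if l = k then φ k b else 1)
    have hprod : ∀ x : ι → Bool, φ i (x i) * φ k (x k) = ∏ l, ψ l (x l) := fun x => by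
      rw [prod_mul_distrib, Fintype.prod_ite_eq', Fintype.prod_ite_eq']
    simp only [hprod, sum_productWeight_mul_prod]
    split_ifs with hik
    · subst hik
      rw [prod_eq_single i (fun l _ hl => by simp [ψ, hl]) (by simp)]
      simp only [ψ, if_true]; ring
    · exact prod_eq_zero (mem_univ i) (by simp [ψ, hik, hφ i])
  calc ∑ x, productWeight w x * (∑ i, φ i (x i)) ^ 2
      = ∑ i, ∑ k, ∑ x, productWeight w x * (φ i (x i) * φ k (x k)) := by
        simp_rw [sq, sum_mul_sum, mul_sum]
        rw [sum_comm]; exact sum_congr rfl fun i _ => sum_comm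
    _ = _ := by simp only [hpair, sum_ite_eq, mem_univ, if_true]

lemma sum_productWeight_le_of_variance_le {w : ι → ℝ} (hw : ∀ i, w i ∈ Set.Icc 0 1)
    (φ : ι → Bool → ℝ) {g k : ℝ} (hg : 0 ≤ g) (hk : 0 < k)
    (hvar : k * ∑ i, w i * (1 - w i) * (φ i true - φ i false) ^ 2 ≤ g ^ 2)
    (s : Finset (ι → Bool))
    (hs : ∀ x ∈ s, g < ∑ i, φ i (x i) - ∑ i, (w i * φ i true + (1 - w i) * φ i false)) :
    ∑ x ∈ s, productWeight w x ≤ 1 / k := by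
  set ψ : ι → Bool → ℝ := fun i b => φ i b - (w i * φ i true + (1 - w i) * φ i false)
  have hψ : ∀ x : ι → Bool, ∑ i, ψ i (x i) =
      ∑ i, φ i (x i) - ∑ i, (w i * φ i true + (1 - w i) * φ i false) := fun x =>
    sum_sub_distrib ..
  refine sum_le_one_div_of_sum_mul_sq_le (productWeight_nonneg hw) hg hk ?_ s
    (fun x hx => (hψ x).symm ▸ hs x hx)
  rw [sum_productWeight_mul_sq_sum w ψ (fun i => by simp only [ψ]; ring)]
  convert hvar using 3 with i
  simp only [ψ]; ring

end ProductWeight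

theorem two_rpow_sub_two_le_card_halfspace {ι : Type*} [Fintype ι] [DecidableEq ι]
    {w : ι → ℝ} (hw : ∀ i, w i ∈ Set.Icc 0 1) (a : ι → ℝ) {c g β : ℝ} (hg : 0 ≤ g)
    (hmean : ∑ i, a i * w i + g ≤ c) (hvarS : 2 * ∑ i, a i ^ 2 * (w i * (1 - w i)) ≤ g ^ 2)
    (hβ : β ≤ ∑ i, binEnt (w i))
    (hvarV : 4 * ∑ i, w i * (1 - w i) * (logb 2 (w i) - logb 2 (1 - w i)) ^ 2 ≤
      (∑ i, binEnt (w i) - β) ^ 2) :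
    (2 : ℝ) ^ (β - 2) ≤ #{x : ι → Bool | ∑ i, a i * (if x i then 1 else 0) ≤ c} := by
  set μ := productWeight w
  set S : (ι → Bool) → ℝ := fun x => ∑ i, a i * (if x i then 1 else 0)
  set V : (ι → Bool) → ℝ := fun x => ∑ i, logb 2 (bernoulliWeight (w i) (x i))
  have hμ := productWeight_nonneg hw
  have hS : ∑ x with c < S x, μ x ≤ 1 / 2 := by
    refine sum_productWeight_le_of_variance_le hw (fun i b => a i * if b then 1 else 0) hg
      two_pos (le_of_eq_of_le (congrArg _ (sum_congr rfl fun i _ => by simp; ring)) hvarS) _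
      fun x hx => ?_
    rw [sum_congr rfl fun i _ => show w i * (a i * if true then 1 else 0) +
      (1 - w i) * (a i * if false then 1 else 0) = a i * w i by simp; ring]
    linarith [(mem_filter.1 hx).2]
  have hV : ∑ x with -β < V x, μ x ≤ 1 / 4 := by
    have hmeanV : ∀ i, w i * logb 2 (bernoulliWeight (w i) true) +
        (1 - w i) * logb 2 (bernoulliWeight (w i) false) = -binEnt (w i) := fun i => by
      simp only [bernoulliWeight, binEnt, logb_inv, if_true, Bool.false_eq_true, if_false]; ring
    refine sum_productWeight_le_of_variance_le hw (fun i b => logb 2 (bernoulliWeight (w i) b))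
      (sub_nonneg.2 hβ) four_pos (le_of_eq_of_le (by simp [bernoulliWeight]) hvarV) _
      fun x hx => ?_
    simp only [hmeanV, sum_neg_distrib, sub_neg_eq_add]
    linarith [(mem_filter.1 hx).2]
  have hgood : 1 / 4 ≤ ∑ x with S x ≤ c ∧ V x ≤ -β, μ x := by
    have hcover : ∀ x, μ x ≤ (if c < S x then μ x else 0) + (if -β < V x then μ x else 0) +
        (if S x ≤ c ∧ V x ≤ -β then μ x else 0) := fun x => by
      have := hμ x
      split_ifs <;> grind
    have := sum_le_sum fun x (_ : x ∈ univ) => hcover x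
    rw [sum_add_distrib, sum_add_distrib, ← sum_filter, ← sum_filter, ← sum_filter,
      sum_productWeight] at this
    linarith
  have hcard : ∑ x with S x ≤ c ∧ V x ≤ -β, μ x ≤ #{x | S x ≤ c ∧ V x ≤ -β} * 2 ^ (-β) := by
    rw [← nsmul_eq_mul]
    refine sum_le_card_nsmul _ _ _ fun x hx => (productWeight_le_two_rpow hw x).trans ?_
    exact rpow_le_rpow_of_exponent_le one_le_two (mem_filter.1 hx).2.2
  have hsub : #{x | S x ≤ c ∧ V x ≤ -β} ≤ #{x | S x ≤ c} :=
    card_le_card (monotone_filter_right _ fun _ _ hx => hx.1)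
  calc (2 : ℝ) ^ (β - 2) = 2 ^ β * (1 / 4) := by rw [rpow_sub two_pos]; norm_num; ring
    _ ≤ 2 ^ β * (#{x | S x ≤ c ∧ V x ≤ -β} * 2 ^ (-β)) := by gcongr; linarith
    _ = #{x | S x ≤ c ∧ V x ≤ -β} := by
        rw [mul_left_comm, ← rpow_add two_pos, add_neg_cancel, rpow_zero, mul_one]
    _ ≤ #{x | S x ≤ c} := by exact_mod_cast hsub

lemma four_mul_mul_sq_logb_sub_le {η p : ℝ} (hη : 0 < η) (hp : p ∈ Set.Icc η (1 - η)) :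
    4 * (p * (1 - p) * (logb 2 p - logb 2 (1 - p)) ^ 2) ≤ logb 2 η ^ 2 := by
  have hlog : ∀ q ∈ Set.Icc η 1, logb 2 q ∈ Set.Icc (logb 2 η) 0 := fun q hq =>
    ⟨logb_le_logb_of_le one_lt_two hη hq.1, logb_nonpos one_lt_two (hη.le.trans hq.1) hq.2⟩
  have h₁ := hlog p ⟨hp.1, by linarith [hp.2]⟩
  have h₂ := hlog (1 - p) ⟨by linarith [hp.2], by linarith [hp.1]⟩
  have hdiff : (logb 2 p - logb 2 (1 - p)) ^ 2 ≤ logb 2 η ^ 2 := by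
    rw [← neg_sq (logb 2 η)]
    exact sq_le_sq' (by linarith [h₁.1, h₂.2]) (by linarith [h₁.2, h₂.1])
  nlinarith [sq_nonneg (2 * p - 1), sq_nonneg (logb 2 p - logb 2 (1 - p))]

section TiltedWeight

variable {ι : Type*} [DecidableEq ι] (a z : ι → ℝ) (R : Finset ι) (θ : ℝ)

noncomputable def tiltedWeight (i : ι) : ℝ := tilt (a i) (z i) (if i ∈ R then θ else 1)

variable {a z R θ}

lemma tiltedWeight_of_notMem {i : ι} (hi : i ∉ R) : tiltedWeight a z R θ i = corner (a i) := by
  simp [tiltedWeight, hi, tilt_one]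

lemma tiltedWeight_mem_Icc (hz : ∀ i, z i ∈ Set.Icc 0 1) (hθ : θ ∈ Set.Icc 0 1) (i : ι) :
    tiltedWeight a z R θ i ∈ Set.Icc 0 1 :=
  tilt_mem_Icc (hz i) (by split_ifs <;> simp [hθ.1, hθ.2])

variable [Fintype ι]

lemma sum_mul_tiltedWeight_add_le {δ : ℝ} {T : Finset ι} (hTR : Disjoint T R)
    (hz : ∀ i, z i ∈ Set.Icc 0 1) (hbal : ∀ i ∈ T ∪ R, z i ∈ Set.Icc δ (1 - δ)) (hθ : 0 ≤ θ) :
    ∑ i, a i * tiltedWeight a z R θ i + (δ * ∑ i ∈ T, |a i| + θ * δ * ∑ i ∈ R, |a i|) ≤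
      ∑ i, a i * z i := by
  have hcoord : ∀ i, a i * tiltedWeight a z R θ i +
      ((if i ∈ T then δ * |a i| else 0) + (if i ∈ R then θ * δ * |a i| else 0)) ≤ a i * z i := by
    intro i
    by_cases hR : i ∈ R
    · have hT : i ∉ T := disjoint_right.1 hTR hR
      simpa [tiltedWeight, hR, hT, mul_assoc] using
        mul_tilt_add_le (a := a i) (hbal i (mem_union_right _ hR)) hθ
    by_cases hT : i ∈ T
    · simpa [tiltedWeight, hR, hT] using
        mul_tilt_add_le (a := a i) (hbal i (mem_union_left _ hT)) zero_le_one
    · simpa [tiltedWeight, hR, hT] using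
        mul_tilt_add_le (a := a i) (δ := 0) (by simpa using hz i) zero_le_one
  calc _ = ∑ i, (a i * tiltedWeight a z R θ i +
        ((if i ∈ T then δ * |a i| else 0) + (if i ∈ R then θ * δ * |a i| else 0))) := by
        rw [sum_add_distrib, sum_add_distrib, ← sum_filter, ← sum_filter, mul_sum, mul_sum]
        simp
    _ ≤ _ := sum_le_sum fun i _ => hcoord i

lemma two_mul_sum_sq_mul_tiltedWeight_le {δ A : ℝ} {m : ℕ} (hA : 0 ≤ A)
    (hm : 1 ≤ 8 * θ * δ ^ 2 * m) (hR : ∀ i ∈ R, m * |a i| ≤ A) :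
    2 * ∑ i, a i ^ 2 * (tiltedWeight a z R θ i * (1 - tiltedWeight a z R θ i)) ≤
      (δ * A + θ * δ * ∑ i ∈ R, |a i|) ^ 2 := by
  have hm0 : (0 : ℝ) < m := Nat.cast_pos.2 (Nat.pos_of_ne_zero fun h => by norm_num [h] at hm)
  have hcoord : ∀ i ∈ R, a i ^ 2 * (tiltedWeight a z R θ i * (1 - tiltedWeight a z R θ i)) ≤
      A * |a i| / (4 * m) := by
    intro i hi
    have hq : tiltedWeight a z R θ i * (1 - tiltedWeight a z R θ i) ≤ 1 / 4 := by
      nlinarith [sq_nonneg (2 * tiltedWeight a z R θ i - 1)]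
    rw [le_div_iff₀ (by positivity), ← sq_abs]
    calc |a i| ^ 2 * (tiltedWeight a z R θ i * (1 - tiltedWeight a z R θ i)) * (4 * m)
        ≤ |a i| ^ 2 * (1 / 4) * (4 * m) := by gcongr
      _ = m * |a i| * |a i| := by ring
      _ ≤ A * |a i| := mul_le_mul_of_nonneg_right (hR i hi) (abs_nonneg _)
  have hAR : 0 ≤ ∑ i ∈ R, |a i| := sum_nonneg fun i _ => abs_nonneg _
  calc 2 * ∑ i, a i ^ 2 * (tiltedWeight a z R θ i * (1 - tiltedWeight a z R θ i))
      = 2 * ∑ i ∈ R, a i ^ 2 * (tiltedWeight a z R θ i * (1 - tiltedWeight a z R θ i)) := by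
        rw [sum_subset (subset_univ R) fun i _ hi => ?_]
        rw [tiltedWeight_of_notMem hi]
        rcases corner_eq_zero_or_eq_one (a i) with h | h <;> simp [h]
    _ ≤ 2 * ∑ i ∈ R, A * |a i| / (4 * m) := by gcongr with i hi; exact hcoord i hi
    _ = A * (∑ i ∈ R, |a i|) / (2 * m) := by rw [← sum_div, ← mul_sum]; ring
    _ ≤ 4 * (δ * A) * (θ * δ * ∑ i ∈ R, |a i|) := by
        rw [div_le_iff₀ (by positivity)]
        nlinarith [mul_le_mul_of_nonneg_left hm (mul_nonneg hA hAR)]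
    _ ≤ _ := by nlinarith [sq_nonneg (δ * A - θ * δ * ∑ i ∈ R, |a i|)]

lemma sum_binEnt_le_sum_binEnt_tiltedWeight_add {η : ℝ} {T : Finset ι}
    (hz : ∀ i, z i ∈ Set.Icc 0 1) (hθ : θ ∈ Set.Icc 0 1) (hη : 0 ≤ η)
    (hsmall : ∀ i, i ∉ T → i ∉ R → binEnt (z i) ≤ η) :
    ∑ i, binEnt (z i) ≤
      ∑ i, binEnt (tiltedWeight a z R θ i) + (θ + η) * Fintype.card ι + #T := by
  have hcoord : ∀ i, binEnt (z i) ≤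
      binEnt (tiltedWeight a z R θ i) + (θ + η) + (if i ∈ T then 1 else 0) := by
    intro i
    have hw := binEnt_nonneg (tiltedWeight_mem_Icc (R := R) (a := a) hz hθ i)
    by_cases hR : i ∈ R
    · have := one_sub_mul_binEnt_le_binEnt_tilt (a := a i) (hz i) hθ
      simp only [tiltedWeight, hR, if_true]
      split_ifs <;> nlinarith [binEnt_le_one (z i), binEnt_nonneg (hz i), hθ.1]
    by_cases hT : i ∈ T
    · simp only [hT, if_true]; linarith [binEnt_le_one (z i), hθ.1]
    · simp only [hT, if_false]; linarith [hsmall i hT hR, hθ.1]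
  calc _ ≤ ∑ i, (binEnt (tiltedWeight a z R θ i) + (θ + η) + (if i ∈ T then 1 else 0)) :=
        sum_le_sum fun i _ => hcoord i
    _ = _ := by
        rw [sum_add_distrib, sum_add_distrib, sum_const, card_univ, ← sum_filter]
        simp; ring

lemma four_mul_sum_logb_variance_tiltedWeight_le {δ : ℝ} (hδ : 0 < δ)
    (hθ : θ ∈ Set.Icc 0 (1 / 2)) (hbal : ∀ i ∈ R, z i ∈ Set.Icc δ (1 - δ)) :
    4 * ∑ i, tiltedWeight a z R θ i * (1 - tiltedWeight a z R θ i) *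
        (logb 2 (tiltedWeight a z R θ i) - logb 2 (1 - tiltedWeight a z R θ i)) ^ 2 ≤
      Fintype.card ι * logb 2 (δ / 2) ^ 2 := by
  rw [mul_sum, ← nsmul_eq_mul, ← card_univ]
  refine sum_le_card_nsmul _ _ _ fun i _ => ?_
  by_cases hR : i ∈ R
  · refine four_mul_mul_sq_logb_sub_le (half_pos hδ) ?_
    simpa [tiltedWeight, hR] using tilt_mem_Icc_half hδ.le (hbal i hR) hθ
  · rw [tiltedWeight_of_notMem hR]
    rcases corner_eq_zero_or_eq_one (a i) with h | h <;> simp [h] <;> positivity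

end TiltedWeight

theorem two_rpow_sum_binEnt_sub_le_card_halfspace {ι : Type*} [Fintype ι] [DecidableEq ι]
    {δ θ η γ : ℝ} {m : ℕ} (hδ : 0 < δ) (hθ : θ ∈ Set.Icc 0 (1 / 2)) (hm : 1 ≤ 8 * θ * δ ^ 2 * m)
    (hsmall : ∀ t ∈ Set.Icc (0 : ℝ) 1, t ∉ Set.Icc δ (1 - δ) → binEnt t ≤ η) (hγ : 0 ≤ γ)
    (hγL : Fintype.card ι * logb 2 (δ / 2) ^ 2 ≤ γ ^ 2)
    {z : ι → ℝ} (hz : ∀ i, z i ∈ Set.Icc 0 1) (a : ι → ℝ) {c : ℝ} (hc : ∑ i, a i * z i ≤ c) :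
    (2 : ℝ) ^ (∑ i, binEnt (z i) - (θ + η) * Fintype.card ι - m - γ - 2) ≤
      #{x : ι → Bool | ∑ i, a i * (if x i then 1 else 0) ≤ c} := by
  have hη : 0 ≤ η := by
    simpa [binEnt_eq_zero_of_eq_zero_or_eq_one] using hsmall 0 (by simp) (by simp [hδ])
  have hθ1 : θ ∈ Set.Icc 0 1 := ⟨hθ.1, by linarith [hθ.2]⟩
  set B : Finset ι := {i | z i ∈ Set.Icc δ (1 - δ)}
  obtain ⟨T, hTB, hTm, hT⟩ := exists_subset_card_le_forall_mul_le_sum (fun i => |a i|) m B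
  set R := B \ T
  have hbal : ∀ i ∈ T ∪ R, z i ∈ Set.Icc δ (1 - δ) := by
    intro i hi
    rw [union_sdiff_of_subset hTB] at hi
    exact (mem_filter.1 hi).2
  have hG := sum_binEnt_le_sum_binEnt_tiltedWeight_add (a := a) hz hθ1 hη (T := T)
    fun i hiT hiR => hsmall _ (hz i) fun hi =>
      hiR (mem_sdiff.2 ⟨mem_filter.2 ⟨mem_univ _, hi⟩, hiT⟩)
  have hvarV := four_mul_sum_logb_variance_tiltedWeight_le (a := a) hδ hθ
    fun i hi => hbal i (mem_union_right _ hi)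
  refine (rpow_le_rpow_of_exponent_le one_le_two ?_).trans
    (two_rpow_sub_two_le_card_halfspace (tiltedWeight_mem_Icc hz hθ1) a
      (g := δ * ∑ i ∈ T, |a i| + θ * δ * ∑ i ∈ R, |a i|) (by have := hθ.1; positivity)
      ((sum_mul_tiltedWeight_add_le disjoint_sdiff hz hbal hθ.1).trans hc)
      (two_mul_sum_sq_mul_tiltedWeight_le (sum_nonneg fun _ _ => abs_nonneg _) hm hT)
      (sub_le_self _ hγ) (by rw [sub_sub_cancel]; linarith))
  have : (#T : ℝ) ≤ m := by exact_mod_cast hTm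
  linarith

lemma ncard_halfspace_eq_card {d : ℕ} (a : Fin d → ℝ) (c : ℝ) :
    {x : Fin d → Bool | ∑ i, a i * bv x i ≤ c}.ncard =
      #{x : Fin d → Bool | ∑ i, a i * (if x i then 1 else 0) ≤ c} := by
  rw [← Set.ncard_coe_finset]; congr; ext; simp [bv]

theorem exists_two_rpow_le_ncard_halfspace (α : ℝ) {ε : ℝ} (hε : 0 < ε) :
    ∃ d₀ : ℕ, ∀ d ≥ d₀, ∀ z : Fin d → ℝ, (∀ i, z i ∈ Set.Icc 0 1) →
      1 - α + ε ≤ (1 / (d : ℝ)) * ∑ i, binEnt (z i) → ∀ (a : Fin d → ℝ) (c : ℝ),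
        ∑ i, a i * z i ≤ c →
          (2 : ℝ) ^ ((1 - α) * d) ≤ ({x : Fin d → Bool | ∑ i, a i * bv x i ≤ c}.ncard : ℝ) := by
  obtain ⟨δ, hδ, hsmall⟩ := exists_pos_binEnt_le_of_notMem_Icc (η := ε / 4) (by positivity)
  set θ := min (ε / 8) (1 / 2)
  have hθ : θ ∈ Set.Icc 0 (1 / 2) := ⟨by positivity, min_le_right _ _⟩
  set m := ⌈1 / (8 * θ * δ ^ 2)⌉₊
  have hm : 1 ≤ 8 * θ * δ ^ 2 * m := by
    have : 0 < θ := by positivity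
    rw [← div_le_iff₀' (by positivity)]; exact Nat.le_ceil _
  set L := logb 2 (δ / 2)
  refine ⟨max ⌈(2 * m + 4) / ε⌉₊ ⌈L ^ 2 / (ε / 8) ^ 2⌉₊, fun d hd z hz hH a c hc => ?_⟩
  have hd₁ : 2 * m + 4 ≤ ε * d := by
    rw [← div_le_iff₀' hε]; exact Nat.ceil_le.1 (le_of_max_le_left hd)
  have hd₂ : L ^ 2 ≤ (ε / 8) ^ 2 * d := by
    rw [← div_le_iff₀' (by positivity)]; exact Nat.ceil_le.1 (le_of_max_le_right hd)
  have hdpos : (0 : ℝ) < d := by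
    have : (0 : ℝ) ≤ m := m.cast_nonneg
    nlinarith
  have hHd : d * (1 - α + ε) ≤ ∑ i, binEnt (z i) := by
    rwa [one_div_mul_eq_div, le_div_iff₀' hdpos] at hH
  have key := two_rpow_sum_binEnt_sub_le_card_halfspace hδ hθ hm hsmall (γ := ε / 8 * d)
    (by positivity) (by simp only [Fintype.card_fin]; nlinarith) hz a hc
  rw [ncard_halfspace_eq_card]
  refine (rpow_le_rpow_of_exponent_le one_le_two ?_).trans key
  have : θ * d ≤ ε / 8 * d := mul_le_mul_of_nonneg_right (min_le_left _ _) hdpos.le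
  simp only [Fintype.card_fin]
  nlinarith

lemma le_minHalfCount {d : ℕ} {z : Fin d → ℝ} {b : ℝ}
    (h : ∀ (a : Fin d → ℝ) (c : ℝ), ∑ i, a i * z i ≤ c →
      b ≤ ({x : Fin d → Bool | ∑ i, a i * bv x i ≤ c}.ncard : ℝ)) :
    b ≤ minHalfCount d z := by
  obtain ⟨a, c, hc, hmin⟩ := Nat.sInf_mem (s := {m : ℕ | ∃ (a : Fin d → ℝ) (c : ℝ),
    ∑ i, a i * z i ≤ c ∧ m = {x : Fin d → Bool | ∑ i, a i * bv x i ≤ c}.ncard})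
    ⟨_, 0, 0, by simp, rfl⟩
  rw [minHalfCount, hmin]
  exact h a c hc

theorem stmt8_general (α ε : ℝ) (hε : 0 < ε) :
    ∃ d₀ : ℕ, ∀ d : ℕ, d₀ ≤ d →
      ({z : Fin d → ℝ | (∀ i, z i ∈ Set.Ioo (0 : ℝ) 1) ∧
          1 - α + ε ≤ (1 / (d : ℝ)) * ∑ i, binEnt (z i)} ⊆ cubeAlpha d α) ∧
      (∀ z : Fin d → ℝ, (∀ i, z i ∈ Set.Ioo (0 : ℝ) 1) →
        1 - α + ε ≤ (1 / (d : ℝ)) * ∑ i, binEnt (z i) →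
        ∀ (a : Fin d → ℝ) (c : ℝ), (∑ i, a i * z i) ≤ c →
          (2 : ℝ) ^ ((1 - α) * (d : ℝ)) ≤
            ({x : Fin d → Bool | (∑ i, a i * bv x i) ≤ c}.ncard : ℝ)) := by
  obtain ⟨d₀, hd₀⟩ := exists_two_rpow_le_ncard_halfspace α hε
  refine ⟨d₀, fun d hd => ⟨?_, fun z hz => hd₀ d hd z fun i => Set.Ioo_subset_Icc_self (hz i)⟩⟩
  rintro z ⟨hz, hH⟩
  have hz' : ∀ i, z i ∈ Set.Icc 0 1 := fun i => Set.Ioo_subset_Icc_self (hz i)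
  refine ⟨hz', ?_⟩
  calc (2 : ℝ) ^ (-(α * d)) = 2 ^ (-(d : ℝ)) * 2 ^ ((1 - α) * d) := by
        rw [← rpow_add two_pos]; ring_nf
    _ ≤ 2 ^ (-(d : ℝ)) * minHalfCount d z := by
        gcongr; exact le_minHalfCount (hd₀ d hd z hz' hH)

/-- For large `d`, every `z` in the open cube with `H(z) ≥ 1 - α + ε` lies in
`[0,1]^d_α`; equivalently, every closed affine halfspace containing such a `z`
contains at least `2^{(1-α)d}` cube vertices. -/
theorem stmt8 (α ε : ℝ) (hα : 0 < α) (hε : 0 < ε) :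
    ∃ d₀ : ℕ, ∀ d : ℕ, d₀ ≤ d →
      ({z : Fin d → ℝ | (∀ i, z i ∈ Set.Ioo (0 : ℝ) 1) ∧
          1 - α + ε ≤ (1 / (d : ℝ)) * ∑ i, binEnt (z i)} ⊆ cubeAlpha d α) ∧
      (∀ z : Fin d → ℝ, (∀ i, z i ∈ Set.Ioo (0 : ℝ) 1) →
        1 - α + ε ≤ (1 / (d : ℝ)) * ∑ i, binEnt (z i) →
        ∀ (a : Fin d → ℝ) (c : ℝ), (∑ i, a i * z i) ≤ c →
          (2 : ℝ) ^ ((1 - α) * (d : ℝ)) ≤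
            ({x : Fin d → Bool | (∑ i, a i * bv x i) ≤ c}.ncard : ℝ)) :=
  stmt8_general α ε hε
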